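/- arXiv:2403.01911 — 4 statements merged into one kernel-verified Lean document; each statement's English description precedes it below -/
import Mathlib

section
/- Let x = F(2n+1) and y = F(2n-1) for n ≥ 1, and set a = y - 1, b = x - 1. Then a² + b² - a - b = 3ab. -/
lemma cassini (k : ℕ) :
    ((Nat.fib (k+1) : ℤ))^2 = Nat.fib k * Nat.fib (k+2) + (-1)^k := by
  induction k with
  | zero => simp
  | succ m ih =>
    have h2 : (Nat.fib (m+2) : ℤ) = Nat.fib m + Nat.fib (m+1) := by
      rw [Nat.fib_add_two]; push_cast; ring
    have h3 : (Nat.fib (m+3) : ℤ) = Nat.fib (m+1) + Nat.fib (m+2) := by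
      rw [show m+3 = (m+1)+2 from rfl, Nat.fib_add_two]; push_cast; ring
    rw [h2] at ih ⊢
    rw [h3, h2]
    rw [pow_succ]
    linear_combination (-1:ℤ) * ih

theorem fib_shifted_solves_turtle_proportions (n : ℕ) (hn : 1 ≤ n)
    (x y a b : ℤ) (hx : x = Nat.fib (2 * n + 1)) (hy : y = Nat.fib (2 * n - 1))
    (ha : a = y - 1) (hb : b = x - 1) :
    a ^ 2 + b ^ 2 - a - b = 3 * a * b := by
  obtain ⟨m, rfl⟩ := Nat.exists_eq_add_of_le hn
  have h1 : 2 * (1 + m) - 1 = 2*m + 1 := by omega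
  have h2 : 2 * (1 + m) + 1 = (2*m+1) + 2 := by omega
  rw [h1] at hy; rw [h2] at hx
  have := cassini (2*m+1)
  have hpow : ((-1 : ℤ))^(2*m+1) = -1 := by
    rw [pow_succ, pow_mul]; simp
  rw [hpow] at this
  have hadd : (Nat.fib (2*m+1+1) : ℤ) = Nat.fib ((2*m+1)+2) - Nat.fib (2*m+1) := by
    rw [Nat.fib_add_two (n := 2*m+1)]; push_cast; ring
  subst ha hb hx hy
  nlinarith [this, hadd]
end

section
/- For integers x, y, the equation xy = (x - y)² + 1 holds whenever (x, y) = (F(2n+1), F(2n-1)) for some n ≥ 1, where F is the Fibonacci sequence. -/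
lemma fib_cassini (m : ℕ) :
    (Nat.fib (2 * m + 3) : ℤ) * Nat.fib (2 * m + 1) = (Nat.fib (2 * m + 2) : ℤ) ^ 2 + 1 := by
  induction m with
  | zero => norm_num
  | succ k ih =>
    have h1 : Nat.fib (2 * k + 5) = Nat.fib (2 * k + 4) + Nat.fib (2 * k + 3) := by
      rw [show 2 * k + 5 = (2 * k + 3) + 2 by ring, Nat.fib_add_two]; ring
    have h2 : Nat.fib (2 * k + 4) = Nat.fib (2 * k + 3) + Nat.fib (2 * k + 2) := by
      rw [show 2 * k + 4 = (2 * k + 2) + 2 by ring, Nat.fib_add_two]; ring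
    have h3 : Nat.fib (2 * k + 3) = Nat.fib (2 * k + 2) + Nat.fib (2 * k + 1) := by
      rw [show 2 * k + 3 = (2 * k + 1) + 2 by ring, Nat.fib_add_two]; ring
    rw [show 2 * (k + 1) + 3 = 2 * k + 5 by ring,
      show 2 * (k + 1) + 1 = 2 * k + 3 by ring,
      show 2 * (k + 1) + 2 = 2 * k + 4 by ring, h1, h2, h3]
    push_cast
    nlinarith [ih]

theorem fib_xy_eq_sub_sq_add_one (x y : ℤ) (n : ℕ) (hn : 1 ≤ n)
    (hx : x = Nat.fib (2 * n + 1)) (hy : y = Nat.fib (2 * n - 1)) :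
    x * y = (x - y) ^ 2 + 1 := by
  obtain ⟨m, rfl⟩ := Nat.exists_eq_add_of_le hn
  subst hx hy
  rw [show 2 * (1 + m) - 1 = 2 * m + 1 by omega,
    show 2 * (1 + m) + 1 = 2 * m + 3 by ring]
  have hfib : Nat.fib (2 * m + 3) = Nat.fib (2 * m + 2) + Nat.fib (2 * m + 1) := by
    rw [show 2 * m + 3 = (2 * m + 1) + 2 by ring, Nat.fib_add_two]; ring
  have h : (Nat.fib (2*m+3) : ℤ) - Nat.fib (2*m+1) = Nat.fib (2*m+2) := by
    rw [hfib]; push_cast; ring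
  nlinarith [fib_cassini m, h]
end

section
/- Define words over {0,1} by B₁ = "00100" and J·A₁ = "010010", with recursions Bₙ = Bₙ₋₁ · (J·Aₙ₋₁) · Bₙ₋₁ and J·Aₙ = (J·Aₙ₋₁) · Bₙ₋₂ · (J·Aₙ₋₁). Then for all n ≥ 1, both Bₙ and J·Aₙ are palindromes. -/
/-- The pair (Bₙ, J·Aₙ): B₀ = "0", B₁ = "00100", J·A₁ = "010010",
    Bₙ = Bₙ₋₁ ++ (J·Aₙ₋₁) ++ Bₙ₋₁ and J·Aₙ = (J·Aₙ₋₁) ++ Bₙ₋₂ ++ (J·Aₙ₋₁) for n ≥ 2. -/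
def BJA : ℕ → List ℕ × List ℕ
  | 0 => ([0], [])
  | 1 => ([0, 0, 1, 0, 0], [0, 1, 0, 0, 1, 0])
  | (n + 2) =>
      ((BJA (n + 1)).1 ++ (BJA (n + 1)).2 ++ (BJA (n + 1)).1,
       (BJA (n + 1)).2 ++ (BJA n).1 ++ (BJA (n + 1)).2)

lemma BJA_pal (n : ℕ) :
    ((BJA n).1).reverse = (BJA n).1 ∧ ((BJA n).2).reverse = (BJA n).2 := by
  induction n using Nat.strong_induction_on with
  | _ n ih =>
    match n with
    | 0 => simp [BJA]
    | 1 => simp [BJA]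
    | (m + 2) =>
      obtain ⟨h1, h2⟩ := ih (m + 1) (by omega)
      obtain ⟨h3, _⟩ := ih m (by omega)
      constructor <;> simp [BJA, List.reverse_append, h1, h2, h3]

theorem strips_are_palindromes (n : ℕ) (hn : 1 ≤ n) :
    ((BJA n).1).reverse = (BJA n).1 ∧ ((BJA n).2).reverse = (BJA n).2 :=
  BJA_pal n
end

section
/- Define word sequences Sₖ and Iₖ over {0,1} by S₀ = ε (empty word), I₀ = "0", and Sₖ₊₁ = Sₖ Iₖ Sₖ Iₖ Sₖ · "10" · Sₖ Iₖ Sₖ · "01" · Sₖ Iₖ Sₖ Iₖ Sₖ, Iₖ₊₁ = "01" · Sₖ Iₖ Sₖ Iₖ Sₖ · "10". Then for all k ≥ 0, the word identity "01" · Sₖ · Iₖ = Iₖ · Sₖ · "10" holds. -/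
/-!
Write `O = [0, 1]` and `E = [1, 0]`. The identity `O S I = I S E` lets an `O` standing in front of
`S I` be traded for an `E` behind it. Expanding `O Sₖ₊₁ Iₖ₊₁` and `Iₖ₊₁ Sₖ₊₁ E` in terms of `Sₖ`,
`Iₖ`, every `O` of either word is followed by `Sₖ Iₖ`, and trading all of them turns both words
into the same one.
-/

/-- The pair (Sₖ, Iₖ) of articulated Spectre worm words, with E = "10" and O = "01". -/
def SI : ℕ → List ℕ × List ℕ
  | 0 => ([], [0])
  | (k + 1) =>
      let s := (SI k).1
      let i := (SI k).2
      (s ++ i ++ s ++ i ++ s ++ [1, 0] ++ s ++ i ++ s ++ [0, 1] ++ s ++ i ++ s ++ i ++ s,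
       [0, 1] ++ (s ++ i ++ s ++ i ++ s) ++ [1, 0])

variable {α : Type*}

def spectreStep (a b : List α) (p : List α × List α) : List α × List α :=
  let s := p.1
  let i := p.2
  (s ++ i ++ s ++ i ++ s ++ b ++ s ++ i ++ s ++ a ++ s ++ i ++ s ++ i ++ s,
   a ++ (s ++ i ++ s ++ i ++ s) ++ b)

theorem SI_succ (k : ℕ) : SI (k + 1) = spectreStep [0, 1] [1, 0] (SI k) := rfl

theorem spectreStep_append_eq {a b : List α} {p : List α × List α}
    (h : a ++ p.1 ++ p.2 = p.2 ++ p.1 ++ b) :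
    a ++ (spectreStep a b p).1 ++ (spectreStep a b p).2 =
      (spectreStep a b p).2 ++ (spectreStep a b p).1 ++ b := by
  have trade (t : List α) : a ++ (p.1 ++ (p.2 ++ t)) = p.2 ++ (p.1 ++ (b ++ t)) := by
    simpa only [List.append_assoc] using congrArg (· ++ t) h
  simp only [spectreStep, List.append_assoc, trade]

theorem OSI_eq_ISE (k : ℕ) :
    [0, 1] ++ (SI k).1 ++ (SI k).2 = (SI k).2 ++ (SI k).1 ++ [1, 0] := by
  induction k with
  | zero => rfl
  | succ k ih => rw [SI_succ]; exact spectreStep_append_eq ih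
end
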